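/- arXiv:1307.8137 — 2 statements merged into one kernel-verified Lean document; each statement's English description precedes it below -/
import Mathlib

section
/- Let t₁ < t₂ < ⋯ < t_N ∈ [0,1] and K = (1 + t_i ∧ t_j)_{i,j=1}^N be the Gram matrix of the Brownian motion released at zero. Then K is invertible, and for any w ∈ ℝ^N, ‖K^{-1/2}w‖₂² = w₁²/(1+t₁) + Σ_{j=2}^N (w_j − w_{j−1})²/(t_j − t_{j−1}). -/
open Matrix

section aux

variable (N : ℕ) (t : Fin (N + 1) → ℝ)

/-- `g k = 1 + t (k-1)` for `1 ≤ k ≤ N+1`, `g 0 = 0`. -/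
noncomputable def stmt7g : ℕ → ℝ
  | 0 => 0
  | k + 1 => 1 + t ⟨min k N, Nat.lt_succ_of_le (min_le_right _ _)⟩

/-- increments -/
noncomputable def stmt7d (k : ℕ) : ℝ := stmt7g N t (k + 1) - stmt7g N t k

/-- the Cholesky factor -/
noncomputable def stmt7L : Matrix (Fin (N + 1)) (Fin (N + 1)) ℝ :=
  Matrix.of fun i j => if (j : ℕ) ≤ (i : ℕ) then Real.sqrt (stmt7d N t j) else 0

end aux

/-- for grid points `t₁ < ⋯ < t_N` in `[0,1]`, the Gram matrix
`K = (1 + t_i ∧ t_j)` of the Brownian motion released at zero is invertible and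
`‖K^{-1/2}w‖₂² = wᵀK⁻¹w = w₁²/(1+t₁) + Σ_{j≥2} (w_j − w_{j−1})²/(t_j − t_{j−1})`. -/
theorem stmt7 (N : ℕ) (t : Fin (N + 1) → ℝ) (ht : StrictMono t)
    (htI : ∀ i, t i ∈ Set.Icc (0:ℝ) 1) :
    (Matrix.of fun i j : Fin (N + 1) => 1 + min (t i) (t j)).det ≠ 0 ∧
    ∀ w : Fin (N + 1) → ℝ,
      w ⬝ᵥ ((Matrix.of fun i j : Fin (N + 1) => 1 + min (t i) (t j))⁻¹ *ᵥ w) =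
        w 0 ^ 2 / (1 + t 0) +
          ∑ j : Fin N, (w j.succ - w j.castSucc) ^ 2 / (t j.succ - t j.castSucc) := by
  set K : Matrix (Fin (N + 1)) (Fin (N + 1)) ℝ :=
    Matrix.of fun i j : Fin (N + 1) => 1 + min (t i) (t j) with hK
  set L := stmt7L N t with hL
  set g := stmt7g N t with hg
  set d := stmt7d N t with hd
  have hgval : ∀ k : Fin (N + 1), g ((k : ℕ) + 1) = 1 + t k := by
    intro k
    show (1 : ℝ) + t ⟨min (k : ℕ) N, _⟩ = 1 + t k
    congr 2
    exact Fin.ext (by simp [Nat.min_eq_left (Nat.le_of_lt_succ k.isLt)])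
  have hg0 : g 0 = 0 := rfl
  have hd0 : d ((0 : Fin (N+1)) : ℕ) = 1 + t 0 := by
    simp only [hd, stmt7d, ← hg]
    rw [show ((0 : Fin (N+1)) : ℕ) = 0 from rfl] at *
    rw [show g (0 + 1) = 1 + t 0 from hgval 0, hg0]
    ring
  have hdsucc : ∀ j : Fin N, d ((j.succ : Fin (N+1)) : ℕ) = t j.succ - t j.castSucc := by
    intro j
    have h3 : ((j.succ : Fin (N+1)) : ℕ) = (j.castSucc : ℕ) + 1 := by simp
    have h1 : g ((j.succ : ℕ) + 1) = 1 + t j.succ := hgval j.succ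
    have h2 : g ((j.castSucc : ℕ) + 1) = 1 + t j.castSucc := hgval j.castSucc
    simp only [hd, stmt7d, ← hg]
    rw [h1, h3, h2]
    ring
  have hdpos : ∀ k : Fin (N + 1), 0 < d (k : ℕ) := by
    intro k
    induction k using Fin.cases with
    | zero => rw [hd0]; have := (htI 0).1; linarith
    | succ j =>
        rw [hdsucc j]
        have h4 : t j.castSucc < t j.succ := ht (by simp [Fin.lt_def])
        linarith
  have hsum : ∀ m : ℕ, ∑ k ∈ Finset.range (m + 1), d k = g (m + 1) := by
    intro m
    have h := Finset.sum_range_sub g (m + 1)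
    rw [hg0, sub_zero] at h
    rw [← h]
    exact Finset.sum_congr rfl fun k _ => rfl
  -- K = L * Lᵀ
  have hfac : K = L * Lᵀ := by
    ext i j
    simp only [hK, Matrix.mul_apply, Matrix.transpose_apply, hL, stmt7L, Matrix.of_apply]
    have key : ∀ k : Fin (N+1),
        (if (k:ℕ) ≤ (i:ℕ) then Real.sqrt (d k) else 0) *
        (if (k:ℕ) ≤ (j:ℕ) then Real.sqrt (d k) else 0) =
        if (k:ℕ) ≤ min (i:ℕ) (j:ℕ) then d (k:ℕ) else 0 := by
      intro k
      by_cases h1 : (k:ℕ) ≤ (i:ℕ) <;> by_cases h2 : (k:ℕ) ≤ (j:ℕ) <;>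
        simp [h1, h2, le_min_iff, Real.mul_self_sqrt (hdpos k).le]
    rw [Finset.sum_congr rfl fun k _ => key k]
    rw [Fin.sum_univ_eq_sum_range (fun k => if k ≤ min (i:ℕ) (j:ℕ) then d k else 0)]
    have hmin : min (i:ℕ) (j:ℕ) < N + 1 := lt_of_le_of_lt (min_le_left _ _) i.isLt
    rw [← Finset.sum_subset (Finset.range_subset_range.2 hmin)
      (fun x _ hx' => by
        simp only [Finset.mem_range, not_lt] at hx'
        exact if_neg (by omega))]
    rw [Finset.sum_congr rfl (fun k hk => if_pos (Nat.lt_succ_iff.1 (Finset.mem_range.1 hk)))]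
    rw [hsum]
    rw [hgval ⟨_, hmin⟩]
    have hfin : (⟨min (i:ℕ) (j:ℕ), hmin⟩ : Fin (N+1)) = min i j := by
      rcases le_total i j with h | h
      · rw [min_eq_left h]; exact Fin.ext (by simpa using min_eq_left (Fin.le_def.1 h))
      · rw [min_eq_right h]; exact Fin.ext (by simpa using min_eq_right (Fin.le_def.1 h))
    rw [hfin, ht.monotone.map_min]
  -- determinant
  have hLtri : L.BlockTriangular OrderDual.toDual := by
    intro i j hij
    simp only [hL, stmt7L, Matrix.of_apply]
    exact if_neg (not_le.2 (by exact_mod_cast hij))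
  have hdetL : L.det ≠ 0 := by
    rw [Matrix.det_of_lowerTriangular L hLtri]
    refine Finset.prod_ne_zero_iff.2 fun k _ => ?_
    simp only [hL, stmt7L, Matrix.of_apply, le_refl, if_true]
    exact Real.sqrt_ne_zero'.2 (hdpos k)
  have hdetK : K.det ≠ 0 := by
    rw [hfac, Matrix.det_mul, Matrix.det_transpose]
    exact mul_ne_zero hdetL hdetL
  refine ⟨hdetK, fun w => ?_⟩
  set W : ℕ → ℝ := fun k => match k with
    | 0 => 0
    | k + 1 => w ⟨min k N, Nat.lt_succ_of_le (min_le_right _ _)⟩ with hW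
  have hWval : ∀ k : Fin (N + 1), W ((k : ℕ) + 1) = w k := by
    intro k
    show w ⟨min (k:ℕ) N, _⟩ = w k
    congr 1
    exact Fin.ext (by simp [Nat.min_eq_left (Nat.le_of_lt_succ k.isLt)])
  set u : Fin (N + 1) → ℝ := fun k => (W ((k:ℕ) + 1) - W k) / Real.sqrt (d k) with hu
  have hLu : L *ᵥ u = w := by
    ext i
    simp only [Matrix.mulVec, dotProduct, hL, stmt7L, Matrix.of_apply]
    have step : ∀ k : Fin (N+1),
        (if (k:ℕ) ≤ (i:ℕ) then Real.sqrt (d k) else 0) * u k =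
        if (k:ℕ) ≤ (i:ℕ) then W ((k:ℕ)+1) - W k else 0 := by
      intro k
      by_cases h1 : (k:ℕ) ≤ (i:ℕ)
      · simp only [h1, if_true, hu]
        field_simp [Real.sqrt_ne_zero'.2 (hdpos k)]
      · simp [h1]
    rw [Finset.sum_congr rfl fun k _ => step k]
    rw [Fin.sum_univ_eq_sum_range (fun k => if k ≤ (i:ℕ) then W (k+1) - W k else 0)]
    rw [← Finset.sum_subset (Finset.range_subset_range.2 i.isLt)
      (fun x _ hx' => by
        simp only [Finset.mem_range, not_lt] at hx'
        exact if_neg (by omega))]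
    rw [Finset.sum_congr rfl (fun k hk => if_pos (Nat.lt_succ_iff.1 (Finset.mem_range.1 hk)))]
    rw [Finset.sum_range_sub W ((i:ℕ)+1)]
    have : W 0 = 0 := rfl
    rw [this, sub_zero, hWval i]
  have hdetLT : Lᵀ.det ≠ 0 := by rwa [Matrix.det_transpose]
  set x : Fin (N+1) → ℝ := (Lᵀ)⁻¹ *ᵥ u with hx
  have hLTx : Lᵀ *ᵥ x = u := by
    rw [hx, Matrix.mulVec_mulVec, Matrix.mul_nonsing_inv _ (isUnit_iff_ne_zero.2 hdetLT),
      Matrix.one_mulVec]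
  have hKx : K *ᵥ x = w := by
    rw [hfac, ← Matrix.mulVec_mulVec, hLTx, hLu]
  have hKiw : K⁻¹ *ᵥ w = x := by
    rw [← hKx, Matrix.mulVec_mulVec, Matrix.nonsing_inv_mul _ (isUnit_iff_ne_zero.2 hdetK),
      Matrix.one_mulVec]
  rw [hKiw]
  have hwx : w ⬝ᵥ x = u ⬝ᵥ u := by
    rw [← hLu, dotProduct_comm, Matrix.dotProduct_mulVec, ← Matrix.mulVec_transpose, hLTx,
      dotProduct_comm]
  rw [hwx]
  have husq : ∀ k : Fin (N+1), u k * u k = (W ((k:ℕ)+1) - W k)^2 / d k := by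
    intro k
    rw [hu]
    rw [div_mul_div_comm, Real.mul_self_sqrt (hdpos k).le, ← pow_two]
  simp only [dotProduct]
  rw [Finset.sum_congr rfl fun k _ => husq k]
  rw [Fin.sum_univ_succ]
  congr 1
  · have h1 : W ((0 : Fin (N+1)) : ℕ) = 0 := rfl
    rw [h1, hWval 0, hd0, sub_zero]
  · refine Finset.sum_congr rfl fun j _ => ?_
    have e1 : ((j.succ : Fin (N+1)) : ℕ) = (j.castSucc : ℕ) + 1 := by simp
    rw [hWval j.succ, hdsucc j, e1, hWval j.castSucc]
end

section
/- Let X(t), t ∈ ℝ^d, be a centered stationary random field with spectral density v satisfying v(t) ≤ B/(1+|t|²)^p for some p > d/2. Then the intrinsic pseudometric d_X(t₁,t₂)² = Var(X(t₁) − X(t₂)) satisfies: (i) if 2p > d+2, d_X(t₁,t₂) ≤ C|t₁−t₂|; (ii) if 2p = d+2, d_X(t₁,t₂)² ≤ C|t₁−t₂|²·(log(1/|t₁−t₂|) ∨ 1); (iii) if d < 2p < d+2, d_X(t₁,t₂)² ≤ C|t₁−t₂|^{2p−d}; where C depends only on B, p, d. Moreover, the d_X-diameter of any set is bounded: sup_t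 Var(X(t)) = ∫_{ℝ^d} v(s) ds ≤ C'. -/
open MeasureTheory Set
open scoped RealInnerProductSpace

/-!
By `2 - 2 cos θ ≤ min (θ², 4)` and `v ≤ B (1 + |s|²)^(-p)`, the variogram at `h` is at most
`B ∫ (1 + |s|²)^(-p) min (|h|²|s|², 4) ds`. When `2p > d + 2` the weight `|s|²(1 + |s|²)^(-p)` is
already integrable, which gives `|h|²`. Otherwise pass to polar coordinates and split the radial
integral at `A = 1/|h|`: on `(0, A]` use `|h|² r^(d+1) (1 + r²)^(-p)`, which contributes
`|h|^(2p-d)` or, when `2p = d + 2`, `|h|² log (1/|h|)`; on `(A, ∞)` use `4 r^(d-1-2p)`, which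
contributes `|h|^(2p-d)`.
-/

namespace SpectralVariogram

open Real

section Radial

variable {n : ℕ} {p : ℝ}

lemma continuous_pow_mul_one_add_sq_rpow_neg (n : ℕ) (p : ℝ) :
    Continuous fun r : ℝ => r ^ n * (1 + r ^ 2) ^ (-p) :=
  (continuous_pow n).mul <| (by fun_prop : Continuous fun r : ℝ => 1 + r ^ 2).rpow_const
    fun r => Or.inl (by positivity)

lemma div_one_add_sq_rpow (B x p : ℝ) : B / (1 + x ^ 2) ^ p = B * (1 + x ^ 2) ^ (-p) := by
  rw [rpow_neg (by positivity), div_eq_mul_inv]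

lemma pow_mul_one_add_sq_rpow_neg_le (hp : 0 ≤ p) {r : ℝ} (hr : 0 < r) :
    r ^ n * (1 + r ^ 2) ^ (-p) ≤ r ^ ((n : ℝ) - 2 * p) := by
  have hle : (1 + r ^ 2) ^ (-p) ≤ (r ^ 2) ^ (-p) :=
    rpow_le_rpow_of_nonpos (by positivity) (by linarith) (by linarith)
  calc r ^ n * (1 + r ^ 2) ^ (-p) ≤ r ^ n * (r ^ 2) ^ (-p) := by gcongr
    _ = r ^ ((n : ℝ) - 2 * p) := by
      rw [← rpow_natCast r 2, ← rpow_mul hr.le, ← rpow_natCast r n, ← rpow_add hr]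
      ring_nf

/-- In polar coordinates `∫ (1 + ‖s‖²)^(-p) min (t²‖s‖²) 4 ds` over `ℝⁿ⁺¹` is a multiple of this. -/
noncomputable def radialMinIntegral (n : ℕ) (p t : ℝ) : ℝ :=
  ∫ r in Ioi 0, r ^ n * ((1 + r ^ 2) ^ (-p) * min (t ^ 2 * r ^ 2) 4)

lemma radialMinIntegral_le_split (hp : (n : ℝ) + 1 < 2 * p) {A : ℝ} (hA : 0 < A) (t : ℝ) :
    radialMinIntegral n p t ≤
      t ^ 2 * (∫ r in Ioc 0 A, r ^ (n + 2) * (1 + r ^ 2) ^ (-p)) +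
        4 * (A ^ ((n : ℝ) + 1 - 2 * p) / (2 * p - n - 1)) := by
  set g := fun r : ℝ => r ^ n * ((1 + r ^ 2) ^ (-p) * min (t ^ 2 * r ^ 2) 4)
  rw [radialMinIntegral]
  have hg : Continuous g := by
    have := continuous_pow_mul_one_add_sq_rpow_neg n p
    simp only [g, ← mul_assoc]
    fun_prop
  have hpow : IntegrableOn (fun r : ℝ => r ^ ((n : ℝ) - 2 * p)) (Ioi A) :=
    integrableOn_Ioi_rpow_of_lt (by linarith) hA
  have htail : ∀ r ∈ Ioi A, g r ≤ 4 * r ^ ((n : ℝ) - 2 * p) := fun r hr => by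
    have hr : 0 < r := hA.trans hr
    calc g r = r ^ n * (1 + r ^ 2) ^ (-p) * min (t ^ 2 * r ^ 2) 4 := mul_assoc .. |>.symm
      _ ≤ r ^ n * (1 + r ^ 2) ^ (-p) * 4 :=
          mul_le_mul_of_nonneg_left (min_le_right _ _) (by positivity)
      _ ≤ 4 * r ^ ((n : ℝ) - 2 * p) := by
          rw [mul_comm]; gcongr; exact pow_mul_one_add_sq_rpow_neg_le (by linarith) hr
  have hg_tail : IntegrableOn g (Ioi A) := by
    refine (hpow.const_mul 4).mono' hg.aestronglyMeasurable.restrict ?_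
    filter_upwards [ae_restrict_mem measurableSet_Ioi] with r hr
    rw [norm_of_nonneg (by have : 0 < r := hA.trans hr; positivity)]
    exact htail r hr
  rw [← Ioc_union_Ioi_eq_Ioi hA.le, setIntegral_union (Ioc_disjoint_Ioi le_rfl) measurableSet_Ioi
    hg.integrableOn_Ioc hg_tail]
  apply add_le_add
  · rw [← integral_const_mul]
    refine setIntegral_mono_on hg.integrableOn_Ioc
      ((continuous_pow_mul_one_add_sq_rpow_neg _ p).integrableOn_Ioc.const_mul _)
      measurableSet_Ioc fun r hr => ?_
    calc g r = r ^ n * (1 + r ^ 2) ^ (-p) * min (t ^ 2 * r ^ 2) 4 := mul_assoc .. |>.symm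
      _ ≤ r ^ n * (1 + r ^ 2) ^ (-p) * (t ^ 2 * r ^ 2) :=
          mul_le_mul_of_nonneg_left (min_le_left _ _) (by have := hr.1.le; positivity)
      _ = t ^ 2 * (r ^ (n + 2) * (1 + r ^ 2) ^ (-p)) := by ring
  · calc ∫ r in Ioi A, g r ≤ ∫ r in Ioi A, 4 * r ^ ((n : ℝ) - 2 * p) :=
          setIntegral_mono_on hg_tail (hpow.const_mul 4) measurableSet_Ioi htail
      _ = 4 * (A ^ ((n : ℝ) + 1 - 2 * p) / (2 * p - n - 1)) := by
          rw [integral_const_mul, integral_Ioi_rpow_of_lt (by linarith) hA, neg_div, ← div_neg]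
          ring_nf

lemma setIntegral_Ioc_pow_mul_le_rpow {k : ℕ} (hp : 0 ≤ p) (hk : 2 * p < k + 1) {A : ℝ}
    (hA : 0 < A) :
    ∫ r in Ioc 0 A, r ^ k * (1 + r ^ 2) ^ (-p) ≤ A ^ ((k : ℝ) + 1 - 2 * p) / (k + 1 - 2 * p) := by
  have hpow : IntegrableOn (fun r : ℝ => r ^ ((k : ℝ) - 2 * p)) (Ioc 0 A) :=
    (intervalIntegral.intervalIntegrable_rpow' (by linarith)).1
  calc ∫ r in Ioc 0 A, r ^ k * (1 + r ^ 2) ^ (-p) ≤ ∫ r in Ioc 0 A, r ^ ((k : ℝ) - 2 * p) :=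
        setIntegral_mono_on (continuous_pow_mul_one_add_sq_rpow_neg k p).integrableOn_Ioc hpow
          measurableSet_Ioc fun r hr => pow_mul_one_add_sq_rpow_neg_le hp hr.1
    _ = A ^ ((k : ℝ) + 1 - 2 * p) / (k + 1 - 2 * p) := by
        rw [← intervalIntegral.integral_of_le hA.le, integral_rpow (Or.inl (by linarith)),
          zero_rpow (by linarith), sub_zero]
        ring_nf

lemma setIntegral_Ioc_pow_mul_le_one_add_log {k : ℕ} (hk : 2 * p = k + 1) {A : ℝ} (hA : 1 ≤ A) :
    ∫ r in Ioc 0 A, r ^ k * (1 + r ^ 2) ^ (-p) ≤ 1 + log A := by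
  have hp : 0 ≤ p := by have := k.cast_nonneg (α := ℝ); linarith
  have hcont := continuous_pow_mul_one_add_sq_rpow_neg k p
  have hinv : IntegrableOn (fun r : ℝ => r⁻¹) (Ioc 1 A) :=
    (intervalIntegral.intervalIntegrable_inv (fun r hr => by
      rw [uIcc_of_le hA] at hr; exact (zero_lt_one.trans_le hr.1).ne') continuousOn_id).1
  rw [← Ioc_union_Ioc_eq_Ioc zero_le_one hA, setIntegral_union (Ioc_disjoint_Ioc_of_le le_rfl)
    measurableSet_Ioc hcont.integrableOn_Ioc hcont.integrableOn_Ioc]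
  apply add_le_add
  · calc ∫ r in Ioc 0 1, r ^ k * (1 + r ^ 2) ^ (-p) ≤ ∫ _ in Ioc (0 : ℝ) 1, (1 : ℝ) :=
          setIntegral_mono_on hcont.integrableOn_Ioc (integrableOn_const (by simp))
            measurableSet_Ioc fun r hr => mul_le_one₀ (pow_le_one₀ hr.1.le hr.2) (by positivity)
              (rpow_le_one_of_one_le_of_nonpos (by nlinarith) (by linarith))
      _ = 1 := by simp
  · calc ∫ r in Ioc 1 A, r ^ k * (1 + r ^ 2) ^ (-p) ≤ ∫ r in Ioc 1 A, r⁻¹ :=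
          setIntegral_mono_on hcont.integrableOn_Ioc hinv measurableSet_Ioc fun r hr => by
            have := pow_mul_one_add_sq_rpow_neg_le hp (zero_lt_one.trans hr.1) (n := k)
            rwa [show (k : ℝ) - 2 * p = -1 by linarith, rpow_neg_one] at this
      _ = log A := by
          rw [← intervalIntegral.integral_of_le hA, integral_inv (by simp [uIcc_of_le hA]), div_one]

lemma radialMinIntegral_le_rpow (hp₁ : (n : ℝ) + 1 < 2 * p) (hp₂ : 2 * p < n + 3)
    {t : ℝ} (ht : 0 < t) :
    radialMinIntegral n p t ≤
      (1 / (n + 3 - 2 * p) + 4 / (2 * p - n - 1)) * t ^ (2 * p - n - 1) := by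
  have hsplit := radialMinIntegral_le_split hp₁ (inv_pos.2 ht) t
  have hhead := setIntegral_Ioc_pow_mul_le_rpow (k := n + 2) (p := p) (by linarith)
    (by push_cast; linarith) (inv_pos.2 ht)
  rw [inv_rpow ht.le, ← rpow_neg ht.le] at hsplit hhead
  push_cast at hhead
  have hexp : t ^ 2 * t ^ (-((n : ℝ) + 2 + 1 - 2 * p)) = t ^ (2 * p - n - 1) := by
    rw [← rpow_natCast, ← rpow_add ht]; ring_nf
  calc _ ≤ t ^ 2 * (t ^ (-((n : ℝ) + 2 + 1 - 2 * p)) / (n + 2 + 1 - 2 * p)) +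
        4 * (t ^ (-((n : ℝ) + 1 - 2 * p)) / (2 * p - n - 1)) :=
        hsplit.trans (add_le_add_left (mul_le_mul_of_nonneg_left hhead (sq_nonneg t)) _)
    _ = (1 / (n + 3 - 2 * p) + 4 / (2 * p - n - 1)) * t ^ (2 * p - n - 1) := by
        rw [← mul_div_assoc, hexp, neg_sub']
        ring_nf

lemma radialMinIntegral_le_log (hp : 2 * p = n + 3) {t : ℝ} (ht : 0 < t) :
    radialMinIntegral n p t ≤
      4 * t ^ 2 * max (log t⁻¹) 1 := by
  -- `max 1 t⁻¹` rather than `t⁻¹`: for `t > 1` the logarithm is negative and useless.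
  set A := max 1 t⁻¹
  have hA : 1 ≤ A := le_max_left _ _
  have hsplit :=
    radialMinIntegral_le_split (n := n) (p := p) (by linarith) (zero_lt_one.trans_le hA) t
  have hhead :=
    setIntegral_Ioc_pow_mul_le_one_add_log (k := n + 2) (p := p) (by push_cast; linarith) hA
  rw [show (n : ℝ) + 1 - 2 * p = -2 by linarith, show 2 * p - n - 1 = (2 : ℝ) by linarith]
    at hsplit
  have hlog : log A ≤ max (log t⁻¹) 1 := by
    rcases le_total 1 t⁻¹ with h | h
    · simp [A, max_eq_right h]
    · simp [A, max_eq_left h]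
  have htail : A ^ (-2 : ℝ) ≤ t ^ 2 := by
    calc A ^ (-2 : ℝ) ≤ t⁻¹ ^ (-2 : ℝ) :=
          rpow_le_rpow_of_nonpos (inv_pos.2 ht) (le_max_right _ _) (by norm_num)
      _ = t ^ 2 := by rw [inv_rpow ht.le, rpow_neg ht.le, inv_inv, rpow_two]
  have hM : 1 ≤ max (log t⁻¹) 1 := le_max_right _ _
  have hhead' : ∫ r in Ioc 0 A, r ^ (n + 2) * (1 + r ^ 2) ^ (-p) ≤ 1 + max (log t⁻¹) 1 := by
    linarith
  nlinarith [mul_le_mul_of_nonneg_left hhead' (sq_nonneg t)]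

end Radial

section Variogram

variable {E : Type*} [NormedAddCommGroup E] [InnerProductSpace ℝ E]

/-- `Var (X (t + h) - X t)` for a stationary field with spectral density `v`,
as `|exp (i θ) - 1|² = 2 - 2 cos θ`. -/
noncomputable def variogram [MeasurableSpace E] (μ : Measure E) (v : E → ℝ) (h : E) : ℝ :=
  ∫ s, (2 - 2 * cos ⟪h, s⟫) * v s ∂μ

lemma two_sub_two_cos_inner_le_min (h s : E) : 2 - 2 * cos ⟪h, s⟫ ≤ min (‖h‖ ^ 2 * ‖s‖ ^ 2) 4 := by
  refine le_min ?_ (by linarith [neg_one_le_cos ⟪h, s⟫])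
  calc 2 - 2 * cos ⟪h, s⟫ ≤ ⟪h, s⟫ ^ 2 := by nlinarith [one_sub_sq_div_two_le_cos (x := ⟪h, s⟫)]
    _ = |⟪h, s⟫| ^ 2 := (sq_abs _).symm
    _ ≤ (‖h‖ * ‖s‖) ^ 2 := pow_le_pow_left₀ (abs_nonneg _) (abs_real_inner_le_norm h s) 2
    _ = ‖h‖ ^ 2 * ‖s‖ ^ 2 := mul_pow ..

variable [FiniteDimensional ℝ E] [MeasurableSpace E] [BorelSpace E] (μ : Measure E)
  [μ.IsAddHaarMeasure] {p B : ℝ} {v : E → ℝ}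

lemma integrable_one_add_norm_sq_rpow_neg (hp : (Module.finrank ℝ E : ℝ) < 2 * p) :
    Integrable (fun s : E => (1 + ‖s‖ ^ 2) ^ (-p)) μ := by
  simpa [neg_div] using integrable_rpow_neg_one_add_norm_sq (μ := μ) hp

lemma integral_one_add_norm_sq_rpow_neg_pos (hp : (Module.finrank ℝ E : ℝ) < 2 * p) :
    0 < ∫ s, (1 + ‖s‖ ^ 2) ^ (-p) ∂μ := by
  rw [integral_pos_iff_support_of_nonneg (fun s => by positivity)
    (integrable_one_add_norm_sq_rpow_neg μ hp)]
  have : Function.support (fun s : E => (1 + ‖s‖ ^ 2) ^ (-p)) = univ :=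
    Function.support_eq_univ fun s => (rpow_pos_of_pos (by positivity) _).ne'
  rw [this]
  exact Measure.measure_univ_pos.2 (NeZero.ne μ)

lemma integral_le_mul_integral_one_add_norm_sq_rpow_neg (hp : (Module.finrank ℝ E : ℝ) < 2 * p)
    (hv0 : ∀ s, 0 ≤ v s) (hvB : ∀ s, v s ≤ B / (1 + ‖s‖ ^ 2) ^ p) :
    ∫ s, v s ∂μ ≤ B * ∫ s, (1 + ‖s‖ ^ 2) ^ (-p) ∂μ := by
  rw [← integral_const_mul]
  exact integral_mono_of_nonneg (.of_forall hv0)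
    ((integrable_one_add_norm_sq_rpow_neg μ hp).const_mul B)
    (.of_forall fun s => (hvB s).trans_eq (div_one_add_sq_rpow ..))

lemma variogram_le_integral_min (hp : (Module.finrank ℝ E : ℝ) < 2 * p) (hv0 : ∀ s, 0 ≤ v s)
    (hvB : ∀ s, v s ≤ B / (1 + ‖s‖ ^ 2) ^ p) (h : E) :
    variogram μ v h ≤ B * ∫ s, (1 + ‖s‖ ^ 2) ^ (-p) * min (‖h‖ ^ 2 * ‖s‖ ^ 2) 4 ∂μ := by
  have hW := integrable_one_add_norm_sq_rpow_neg μ hp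
  have hmin : ∀ s : E, 0 ≤ min (‖h‖ ^ 2 * ‖s‖ ^ 2) 4 := fun s =>
    le_min (by positivity) (by norm_num)
  have hint : Integrable (fun s : E => (1 + ‖s‖ ^ 2) ^ (-p) * min (‖h‖ ^ 2 * ‖s‖ ^ 2) 4) μ := by
    refine (hW.mul_const 4).mono' ?_ (.of_forall fun s => ?_)
    · exact (hW.aestronglyMeasurable.mul (by fun_prop : Continuous fun s : E =>
        min (‖h‖ ^ 2 * ‖s‖ ^ 2) (4 : ℝ)).aestronglyMeasurable)
    · rw [norm_of_nonneg (mul_nonneg (by positivity) (hmin s))]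
      exact mul_le_mul_of_nonneg_left (min_le_right _ _) (by positivity)
  rw [variogram, ← integral_const_mul]
  refine integral_mono_of_nonneg
    (.of_forall fun s => mul_nonneg (by linarith [cos_le_one ⟪h, s⟫]) (hv0 s))
    (hint.const_mul B) (.of_forall fun s => ?_)
  calc (2 - 2 * cos ⟪h, s⟫) * v s ≤ min (‖h‖ ^ 2 * ‖s‖ ^ 2) 4 * v s :=
        mul_le_mul_of_nonneg_right (two_sub_two_cos_inner_le_min h s) (hv0 s)
    _ ≤ min (‖h‖ ^ 2 * ‖s‖ ^ 2) 4 * (B * (1 + ‖s‖ ^ 2) ^ (-p)) :=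
        mul_le_mul_of_nonneg_left ((hvB s).trans_eq (div_one_add_sq_rpow ..)) (hmin s)
    _ = B * ((1 + ‖s‖ ^ 2) ^ (-p) * min (‖h‖ ^ 2 * ‖s‖ ^ 2) 4) := by ring

lemma variogram_le_mul_sq (hp : (Module.finrank ℝ E : ℝ) + 2 < 2 * p) (hB : 0 ≤ B)
    (hv0 : ∀ s, 0 ≤ v s) (hvB : ∀ s, v s ≤ B / (1 + ‖s‖ ^ 2) ^ p) (h : E) :
    variogram μ v h ≤ B * (∫ s, (1 + ‖s‖ ^ 2) ^ (-(p - 1)) ∂μ) * ‖h‖ ^ 2 := by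
  refine (variogram_le_integral_min μ (by linarith) hv0 hvB h).trans ?_
  rw [mul_assoc, ← integral_mul_const]
  refine mul_le_mul_of_nonneg_left (integral_mono_of_nonneg
    (.of_forall fun s => mul_nonneg (by positivity) (le_min (by positivity) (by norm_num)))
    ((integrable_one_add_norm_sq_rpow_neg μ (by linarith)).mul_const _)
    (.of_forall fun s => ?_)) hB
  have hpos : (0 : ℝ) < 1 + ‖s‖ ^ 2 := by positivity
  calc (1 + ‖s‖ ^ 2) ^ (-p) * min (‖h‖ ^ 2 * ‖s‖ ^ 2) 4
      ≤ (1 + ‖s‖ ^ 2) ^ (-p) * ((1 + ‖s‖ ^ 2) * ‖h‖ ^ 2) := by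
        gcongr
        exact (min_le_left _ _).trans (by nlinarith [sq_nonneg ‖h‖])
    _ = (1 + ‖s‖ ^ 2) ^ (-(p - 1)) * ‖h‖ ^ 2 := by
        rw [← mul_assoc, ← rpow_add_one hpos.ne']; ring_nf

lemma variogram_le_radialMinIntegral [Nontrivial E] (hp : (Module.finrank ℝ E : ℝ) < 2 * p)
    (hv0 : ∀ s, 0 ≤ v s) (hvB : ∀ s, v s ≤ B / (1 + ‖s‖ ^ 2) ^ p) (h : E) :
    variogram μ v h ≤ B * (Module.finrank ℝ E * μ.real (Metric.ball 0 1)) *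
      radialMinIntegral (Module.finrank ℝ E - 1) p ‖h‖ := by
  have hpolar :=
    integral_fun_norm_addHaar μ fun r => (1 + r ^ 2) ^ (-p) * min (‖h‖ ^ 2 * r ^ 2) 4
  simp only [nsmul_eq_mul, smul_eq_mul] at hpolar
  rw [radialMinIntegral, mul_assoc B, mul_assoc, ← hpolar]
  exact variogram_le_integral_min μ hp hv0 hvB h

lemma variogram_le_log [Nontrivial E] (hp : 2 * p = Module.finrank ℝ E + 2) (hB : 0 ≤ B)
    (hv0 : ∀ s, 0 ≤ v s) (hvB : ∀ s, v s ≤ B / (1 + ‖s‖ ^ 2) ^ p) (h : E) :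
    variogram μ v h ≤ 4 * B * (Module.finrank ℝ E * μ.real (Metric.ball 0 1)) * ‖h‖ ^ 2 *
      max (log (1 / ‖h‖)) 1 := by
  rcases (norm_nonneg h).eq_or_lt with h0 | hpos
  · simp [variogram, norm_eq_zero.1 h0.symm]
  have hn : ((Module.finrank ℝ E - 1 : ℕ) : ℝ) + 1 = Module.finrank ℝ E := by
    rw [Nat.cast_pred Module.finrank_pos]; ring
  calc variogram μ v h ≤ _ := variogram_le_radialMinIntegral μ (by linarith) hv0 hvB h
    _ ≤ B * (Module.finrank ℝ E * μ.real (Metric.ball 0 1)) *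
          (4 * ‖h‖ ^ 2 * max (log ‖h‖⁻¹) 1) :=
        mul_le_mul_of_nonneg_left (radialMinIntegral_le_log (by linarith) hpos)
          (by positivity)
    _ = _ := by rw [one_div]; ring

lemma variogram_le_rpow [Nontrivial E] (hp₁ : (Module.finrank ℝ E : ℝ) < 2 * p)
    (hp₂ : 2 * p < Module.finrank ℝ E + 2) (hB : 0 ≤ B)
    (hv0 : ∀ s, 0 ≤ v s) (hvB : ∀ s, v s ≤ B / (1 + ‖s‖ ^ 2) ^ p) (h : E) :
    variogram μ v h ≤ B * (Module.finrank ℝ E * μ.real (Metric.ball 0 1)) *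
      (1 / (Module.finrank ℝ E + 2 - 2 * p) + 4 / (2 * p - Module.finrank ℝ E)) *
        ‖h‖ ^ (2 * p - Module.finrank ℝ E) := by
  rcases (norm_nonneg h).eq_or_lt with h0 | hpos
  · simp [variogram, norm_eq_zero.1 h0.symm, zero_rpow (sub_pos.2 hp₁).ne']
  have hn : ((Module.finrank ℝ E - 1 : ℕ) : ℝ) + 1 = Module.finrank ℝ E := by
    rw [Nat.cast_pred Module.finrank_pos]; ring
  have hradial := radialMinIntegral_le_rpow (n := Module.finrank ℝ E - 1) (p := p)
    (by linarith) (by linarith) hpos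
  rw [show ((Module.finrank ℝ E - 1 : ℕ) : ℝ) + 3 - 2 * p = Module.finrank ℝ E + 2 - 2 * p by
      linarith, sub_sub, hn] at hradial
  calc variogram μ v h ≤ _ := variogram_le_radialMinIntegral μ hp₁ hv0 hvB h
    _ ≤ _ := by rw [mul_assoc _ _ (‖h‖ ^ _)]; gcongr

theorem exists_variogram_bounds [Nontrivial E] (hp : (Module.finrank ℝ E : ℝ) < 2 * p)
    (hB : 0 < B) :
    ∃ C > 0, ∀ v : E → ℝ, (∀ s, 0 ≤ v s) → (∀ s, v s ≤ B / (1 + ‖s‖ ^ 2) ^ p) → ∀ h : E,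
      ((Module.finrank ℝ E : ℝ) + 2 < 2 * p → √(variogram μ v h) ≤ C * ‖h‖) ∧
      (2 * p = Module.finrank ℝ E + 2 →
        variogram μ v h ≤ C * ‖h‖ ^ 2 * max (log (1 / ‖h‖)) 1) ∧
      ((Module.finrank ℝ E : ℝ) < 2 * p → 2 * p < Module.finrank ℝ E + 2 →
        variogram μ v h ≤ C * ‖h‖ ^ (2 * p - Module.finrank ℝ E)) := by
  have hc : 0 < Module.finrank ℝ E * μ.real (Metric.ball 0 1) :=
    mul_pos (Nat.cast_pos.2 Module.finrank_pos)
      (ENNReal.toReal_pos (Metric.measure_ball_pos μ 0 one_pos).ne' measure_ball_lt_top.ne)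
  rcases lt_trichotomy ((Module.finrank ℝ E : ℝ) + 2) (2 * p) with hp' | hp' | hp'
  · have hK := integral_one_add_norm_sq_rpow_neg_pos μ (p := p - 1) (by linarith)
    refine ⟨_, sqrt_pos.2 (mul_pos hB hK), fun v hv0 hvB h =>
      ⟨fun _ => ?_, fun _ => by linarith, fun _ _ => by linarith⟩⟩
    rw [← sqrt_sq (norm_nonneg h), ← sqrt_mul (mul_pos hB hK).le]
    exact sqrt_le_sqrt (variogram_le_mul_sq μ hp' hB.le hv0 hvB h)
  · exact ⟨_, by positivity, fun v hv0 hvB h =>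
      ⟨fun _ => by linarith, fun _ => variogram_le_log μ hp'.symm hB.le hv0 hvB h,
        fun _ _ => by linarith⟩⟩
  · refine ⟨_, mul_pos (mul_pos hB hc) (add_pos (div_pos one_pos (by linarith))
      (div_pos four_pos (by linarith))), fun v hv0 hvB h =>
      ⟨fun _ => by linarith, fun _ => by linarith, fun _ _ =>
        variogram_le_rpow μ hp hp' hB.le hv0 hvB h⟩⟩

end Variogram

end SpectralVariogram

open SpectralVariogram

/-- for a centered stationary field with spectral density
`v(t) ≤ B/(1+|t|²)^p`, `p > d/2`, the intrinsic pseudometric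
`d_X(t₁,t₂)² = ∫ |e^{i⟨t₁−t₂,s⟩} − 1|² v(s) ds = ∫ (2 − 2cos⟨t₁−t₂,s⟩) v(s) ds` obeys
(i) `d_X ≤ C|t₁−t₂|` if `2p > d+2`; (ii) `d_X² ≤ C|t₁−t₂|²(log(1/|t₁−t₂|) ∨ 1)` if
`2p = d+2`; (iii) `d_X² ≤ C|t₁−t₂|^{2p−d}` if `d < 2p < d+2`; and `∫ v ≤ C'`. -/
theorem stmt19 (d : ℕ) (hd : 0 < d) (p B : ℝ) (hp : (d : ℝ) / 2 < p) (hB : 0 < B) :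
    ∃ C C' : ℝ, 0 < C ∧ 0 < C' ∧
      ∀ v : EuclideanSpace ℝ (Fin d) → ℝ,
        Measurable v → (∀ t, 0 ≤ v t) →
        (∀ t, v t ≤ B / (1 + ‖t‖ ^ 2) ^ p) →
        (∀ t₁ t₂ : EuclideanSpace ℝ (Fin d),
          ((d : ℝ) + 2 < 2 * p →
            Real.sqrt (∫ s, (2 - 2 * Real.cos (⟪t₁ - t₂, s⟫ : ℝ)) * v s) ≤
              C * ‖t₁ - t₂‖) ∧
          (2 * p = (d : ℝ) + 2 →
            (∫ s, (2 - 2 * Real.cos (⟪t₁ - t₂, s⟫ : ℝ)) * v s) ≤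
              C * ‖t₁ - t₂‖ ^ 2 * max (Real.log (1 / ‖t₁ - t₂‖)) 1) ∧
          ((d : ℝ) < 2 * p → 2 * p < (d : ℝ) + 2 →
            (∫ s, (2 - 2 * Real.cos (⟪t₁ - t₂, s⟫ : ℝ)) * v s) ≤
              C * ‖t₁ - t₂‖ ^ (2 * p - (d : ℝ)))) ∧
        (∫ s, v s) ≤ C' := by
  have hdim : Module.finrank ℝ (EuclideanSpace ℝ (Fin d)) = d := finrank_euclideanSpace_fin
  have : Nontrivial (EuclideanSpace ℝ (Fin d)) := Module.nontrivial_of_finrank_pos (hdim ▸ hd)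
  have hp' : (Module.finrank ℝ (EuclideanSpace ℝ (Fin d)) : ℝ) < 2 * p := by
    rw [hdim]; linarith
  obtain ⟨C, hC, hvariogram⟩ := exists_variogram_bounds volume hp' hB
  rw [hdim] at hvariogram
  exact ⟨C, _, hC, mul_pos hB (integral_one_add_norm_sq_rpow_neg_pos volume hp'),
    fun v _ hv0 hvB => ⟨fun t₁ t₂ => hvariogram v hv0 hvB (t₁ - t₂),
      integral_le_mul_integral_one_add_norm_sq_rpow_neg volume hp' hv0 hvB⟩⟩
end
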